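/- Failure of GLT(k) in the finite: for the vocabulary τ = {≤, S, P, c, d} (≤, S binary relation symbols, P a unary relation symbol, c, d constant symbols) and for each natural number k, there is an FO(τ) sentence that is k-hereditary over the class 𝒮 of all finite τ-structures but is not equivalent over 𝒮 to any ∃^k∀* sentence. -/

import Mathlib

open FirstOrder Language

namespace LTFinite

/-- Relation symbols of the vocabulary `τ = {≤, S, P, c, d}`: binary `≤` and `S`, unary `P`. -/
inductive TauRel : ℕ → Type
  | le : TauRel 2
  | succ : TauRel 2
  | pelt : TauRel 1

/-- Function symbols of `τ`: the constant symbols `c` and `d`. -/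
inductive TauFun : ℕ → Type
  | c : TauFun 0
  | d : TauFun 0

/-- The vocabulary `τ = {≤, S, P, c, d}` with binary relation symbols `≤` and `S`, a unary
relation symbol `P`, and constant symbols `c` and `d`. -/
def tau : FirstOrder.Language := ⟨TauFun, TauRel⟩

/-- Universally quantify over the last `n` free (de Bruijn) variables of a bounded formula,
leaving the first `k` variables free. -/
def allsFrom (k : ℕ) : ∀ {n : ℕ}, tau.BoundedFormula Empty (k + n) → tau.BoundedFormula Empty k
  | 0, ψ => ψ
  | _ + 1, ψ => allsFrom k ψ.all

/-- The `∃^k∀*` sentence `∃x₁…∃x_k ∀y₁…∀y_n ψ` built from a quantifier-free matrix `ψ`. -/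
def existsForallSentence (k n : ℕ) (ψ : tau.BoundedFormula Empty (k + n)) : tau.Sentence :=
  (allsFrom k ψ).exs

/-!
`phi k` says that `≤` is a linear order from `c` to `d` in which `S a b` forces `b` to cover
`a`, and that if every element other than `d` has an `S`-successor, then at least `k + 1`
elements satisfy `P`. The first part is universal, so substructures inherit it. In a finite model,
a substructure in which the second hypothesis holds contains `c` and the cover of each of its
elements other than `d`, so it is the whole structure. Hence `phi k` is hereditary with `C = ∅`.

Against an `∃^k∀*` sentence `γ`, take the chain `B = 0 < 1 < ⋯ < L` with `k + 1` marks spaced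
far apart. If `B ⊨ γ`, the `k` witnesses miss some mark `q` by a wide margin. Erasing that mark
gives a chain `A` that fails `phi k`. The finite substructure of `A` spanned by the witnesses and
any further tuple still embeds into `B` while fixing the witnesses: translate a window around `q`
so that nothing lands on `q`. Since quantifier-free formulas are preserved by embeddings,
`A ⊨ γ`.
-/

section Semantics

variable (M : Type*) [tau.Structure M]

def cM : M := constantMap (L := tau) TauFun.c
def dM : M := constantMap (L := tau) TauFun.d

variable {M}

def leM (a b : M) : Prop := Structure.RelMap (L := tau) TauRel.le ![a, b]
def sM (a b : M) : Prop := Structure.RelMap (L := tau) TauRel.succ ![a, b]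
def pM (a : M) : Prop := Structure.RelMap (L := tau) TauRel.pelt ![a]

variable (M)

structure ChainAxioms : Prop where
  le_trans : ∀ a b c : M, leM a b → leM b c → leM a c
  le_antisymm : ∀ a b : M, leM a b → leM b a → a = b
  le_total : ∀ a b : M, leM a b ∨ leM b a
  bounds : ∀ a : M, leM (cM M) a ∧ leM a (dM M)
  succ : ∀ a b z : M, sM a b → leM a b ∧ a ≠ b ∧ (leM a z → a ≠ z → leM b z)

def HasSuccessors : Prop := ∀ a : M, a ≠ dM M → ∃ b, sM a b

def MarkedAtLeast (m : ℕ) : Prop := ∃ g : Fin m → M, Function.Injective g ∧ ∀ i, pM (g i)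

end Semantics

section Formulas

variable {M : Type*} [tau.Structure M] {α : Type}

def leF (t₁ t₂ : tau.Term α) : tau.Formula α :=
  Relations.formula₂ (L := tau) TauRel.le t₁ t₂

def sF (t₁ t₂ : tau.Term α) : tau.Formula α :=
  Relations.formula₂ (L := tau) TauRel.succ t₁ t₂

def pF (t : tau.Term α) : tau.Formula α := Relations.formula₁ (L := tau) TauRel.pelt t

def cT : tau.Term α := Constants.term (L := tau) TauFun.c
def dT : tau.Term α := Constants.term (L := tau) TauFun.d

@[simp] lemma realize_leF {t₁ t₂ : tau.Term α} {v : α → M} :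
    (leF t₁ t₂).Realize v ↔ leM (t₁.realize v) (t₂.realize v) := Formula.realize_rel₂

@[simp] lemma realize_sF {t₁ t₂ : tau.Term α} {v : α → M} :
    (sF t₁ t₂).Realize v ↔ sM (t₁.realize v) (t₂.realize v) := Formula.realize_rel₂

@[simp] lemma realize_pF {t : tau.Term α} {v : α → M} :
    (pF t).Realize v ↔ pM (t.realize v) := Formula.realize_rel₁

@[simp] lemma realize_cT {v : α → M} : (cT : tau.Term α).realize v = cM M :=
  Term.realize_constants

@[simp] lemma realize_dT {v : α → M} : (dT : tau.Term α).realize v = dM M :=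
  Term.realize_constants

end Formulas

noncomputable def alpha : tau.Sentence :=
  (Formula.iAlls (Fin 3) <| Formula.relabel Sum.inr
    ((leF (.var 0) (.var 1) ⊓ leF (.var 1) (.var 2)).imp (leF (.var 0) (.var 2)))) ⊓
  (Formula.iAlls (Fin 2) <| Formula.relabel Sum.inr
    ((leF (.var 0) (.var 1) ⊓ leF (.var 1) (.var 0)).imp ((Term.var 0).equal (.var 1)))) ⊓
  (Formula.iAlls (Fin 2) <| Formula.relabel Sum.inr
    (leF (.var 0) (.var 1) ⊔ leF (.var 1) (.var 0))) ⊓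
  (Formula.iAlls (Fin 1) <| Formula.relabel Sum.inr
    (leF cT (.var 0) ⊓ leF (.var 0) dT)) ⊓
  (Formula.iAlls (Fin 3) <| Formula.relabel Sum.inr
    ((sF (.var 0) (.var 1)).imp
      (leF (.var 0) (.var 1) ⊓ ∼((Term.var 0).equal (.var 1)) ⊓
        ((leF (.var 0) (.var 2) ⊓ ∼((Term.var 0).equal (.var 2))).imp
          (leF (.var 1) (.var 2))))))

noncomputable def beta : tau.Sentence :=
  Formula.iAlls (Fin 1) <| Formula.relabel Sum.inr
    ((∼((Term.var 0).equal dT)).imp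
      (Formula.iExs (Fin 1) <| Formula.relabel ![Sum.inl 0, Sum.inr 0] (sF (.var 0) (.var 1))))

noncomputable def theta (m : ℕ) : tau.Sentence :=
  Formula.iExs (Fin m) <| Formula.relabel Sum.inr
    (Formula.iInf (fun i : Fin m => pF (.var i)) ⊓
      Formula.iInf fun p : {p : Fin m × Fin m // p.1 ≠ p.2} =>
        ∼((Term.var p.1.1).equal (.var p.1.2)))

noncomputable def phi (k : ℕ) : tau.Sentence := alpha ⊓ (beta.imp (theta (k + 1)))

section Realize

variable {M : Type*} [tau.Structure M]

lemma realize_alpha : M ⊨ alpha ↔ ChainAxioms M := by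
  simp only [alpha, Sentence.Realize, Formula.realize_inf, Formula.realize_iAlls,
    Formula.realize_imp, Formula.realize_sup, Formula.realize_not, Formula.realize_equal,
    Formula.realize_relabel, realize_leF, realize_sF, realize_cT, realize_dT, Term.realize_var,
    Function.comp_apply, Sum.elim_inr]
  constructor
  · rintro ⟨⟨⟨⟨h₁, h₂⟩, h₃⟩, h₄⟩, h₅⟩
    refine ⟨fun a b c hab hbc => h₁ ![a, b, c] ⟨hab, hbc⟩,
      fun a b hab hba => h₂ ![a, b] ⟨hab, hba⟩, fun a b => h₃ ![a, b], fun a => h₄ ![a],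
      fun a b z hs => ?_⟩
    obtain ⟨⟨hle, hne⟩, himm⟩ := h₅ ![a, b, z] hs
    exact ⟨hle, hne, fun haz hne' => himm ⟨haz, hne'⟩⟩
  · rintro ⟨h₁, h₂, h₃, h₄, h₅⟩
    refine ⟨⟨⟨⟨fun i hi => h₁ _ _ _ hi.1 hi.2, fun i hi => h₂ _ _ hi.1 hi.2⟩,
      fun i => h₃ _ _⟩, fun i => h₄ _⟩, fun i hs => ?_⟩
    obtain ⟨hle, hne, himm⟩ := h₅ _ _ (i 2) hs
    exact ⟨⟨hle, hne⟩, fun h => himm h.1 h.2⟩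

lemma realize_beta : M ⊨ beta ↔ HasSuccessors M := by
  simp only [beta, Sentence.Realize, Formula.realize_iAlls, Formula.realize_imp,
    Formula.realize_not, Formula.realize_equal, Formula.realize_iExs, Formula.realize_relabel,
    realize_sF, realize_dT, Term.realize_var, Function.comp_apply, Sum.elim_inr]
  constructor
  · intro h a ha
    obtain ⟨b, hb⟩ := h ![a] ha
    exact ⟨b 0, hb⟩
  · intro h a ha
    obtain ⟨b, hb⟩ := h (a 0) ha
    exact ⟨![b], hb⟩

lemma realize_theta {m : ℕ} : M ⊨ theta m ↔ MarkedAtLeast M m := by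
  simp only [theta, Sentence.Realize, Formula.realize_iExs, Formula.realize_relabel,
    Formula.realize_inf, Formula.realize_iInf, Formula.realize_not, Formula.realize_equal,
    realize_pF, Term.realize_var, Function.comp_apply, Sum.elim_inr]
  refine exists_congr fun g => and_comm.trans (and_congr_left' ?_)
  exact ⟨fun h a b hab => by_contra fun hne => h ⟨(a, b), hne⟩ hab, fun h p hp => p.2 (h hp)⟩

lemma realize_phi {k : ℕ} :
    M ⊨ phi k ↔ ChainAxioms M ∧ (HasSuccessors M → MarkedAtLeast M (k + 1)) := by
  simp only [phi, Sentence.Realize, Formula.realize_inf, Formula.realize_imp]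
  rw [← Sentence.Realize, ← Sentence.Realize, ← Sentence.Realize, realize_alpha, realize_beta,
    realize_theta]

lemma realize_allsFrom {k : ℕ} : ∀ {n : ℕ} (ψ : tau.BoundedFormula Empty (k + n))
    (v : Empty → M) (xs : Fin k → M),
    (allsFrom k ψ).Realize v xs ↔ ∀ ys : Fin n → M, ψ.Realize v (Fin.append xs ys)
  | 0, ψ, v, xs => by
    simp only [allsFrom, Fin.append_right_nil, Fin.cast_refl, Function.comp_id, forall_const]
  | n + 1, ψ, v, xs => by
    simp only [allsFrom, realize_allsFrom ψ.all, BoundedFormula.realize_all, ← Fin.append_snoc]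
    exact ⟨fun h ys => Fin.snoc_init_self ys ▸ h (Fin.init ys) (ys (Fin.last n)),
      fun h ys a => h (Fin.snoc ys a)⟩

lemma realize_existsForallSentence {k n : ℕ} (ψ : tau.BoundedFormula Empty (k + n)) :
    M ⊨ existsForallSentence k n ψ ↔
      ∃ xs : Fin k → M, ∀ ys : Fin n → M, ψ.Realize default (Fin.append xs ys) :=
  BoundedFormula.realize_exs.trans (exists_congr fun xs => realize_allsFrom ψ default xs)

end Realize

lemma realize_of_embedding_substructure {L : Language} {M N : Type*} [L.Structure M]
    [L.Structure N] {n : ℕ} {ψ : L.BoundedFormula Empty n} (hψ : ψ.IsQF)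
    {T : L.Substructure M} (g : T ↪[L] N) (zs : Fin n → T) (h : ψ.Realize default (g ∘ zs)) :
    ψ.Realize default (fun i => (zs i : M)) := by
  have hT := (hψ.realize_embedding g (v := default) (xs := zs)).1
    (by rwa [Subsingleton.elim (g ∘ default) default])
  rwa [← hψ.realize_embedding T.subtype, Subsingleton.elim (T.subtype ∘ default) default] at hT

lemma comp_vec₂ {α β : Type*} (g : α → β) (a b : α) : g ∘ ![a, b] = ![g a, g b] := by
  ext i; fin_cases i <;> rfl

section Heredity

variable {M N : Type*} [tau.Structure M] [tau.Structure N]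

lemma leM_embedding (f : N ↪[tau] M) (a b : N) : leM (f a) (f b) ↔ leM a b := by
  unfold leM; rw [← comp_vec₂]; exact StrongHomClass.map_rel f _ _

lemma sM_embedding (f : N ↪[tau] M) (a b : N) : sM (f a) (f b) ↔ sM a b := by
  unfold sM; rw [← comp_vec₂]; exact StrongHomClass.map_rel f _ _

lemma cM_embedding (f : N ↪[tau] M) : f (cM N) = cM M := f.map_constants _

lemma dM_embedding (f : N ↪[tau] M) : f (dM N) = dM M := f.map_constants _

lemma ChainAxioms.of_embedding (f : N ↪[tau] M) (h : ChainAxioms M) : ChainAxioms N where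
  le_trans a b c := by simpa only [← leM_embedding f] using h.le_trans _ _ _
  le_antisymm a b := by
    simpa only [← leM_embedding f] using fun h₁ h₂ => f.injective (h.le_antisymm _ _ h₁ h₂)
  le_total a b := by simpa only [← leM_embedding f] using h.le_total _ _
  bounds a := by simpa only [← leM_embedding f, cM_embedding, dM_embedding] using h.bounds (f a)
  succ a b z hs := by
    obtain ⟨hle, hne, himm⟩ := h.succ _ _ (f z) ((sM_embedding f a b).2 hs)
    simp only [leM_embedding] at hle himm
    exact ⟨hle, fun e => hne (congrArg f e), fun haz hne' => himm haz fun e => hne' (f.injective e)⟩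

lemma ChainAxioms.surjective_of_embedding [Finite M] (h : ChainAxioms M) (f : N ↪[tau] M)
    (hN : HasSuccessors N) : Function.Surjective f := by
  classical
  let _ : LinearOrder M :=
    { le := leM, le_refl := fun a => (h.le_total a a).elim id id, le_trans := h.le_trans,
      le_antisymm := h.le_antisymm, le_total := h.le_total, toDecidableLE := Classical.decRel _ }
  have _ := Fintype.ofFinite M
  by_contra hf
  obtain ⟨x, hx⟩ := not_forall.1 hf
  have hcx : cM M < x :=
    lt_of_le_of_ne (h.bounds x).1 fun e => hx ⟨cM N, by rw [cM_embedding, e]⟩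
  -- the largest point of the image below a missing `x` would have its cover in the image too
  let below : Finset M := {z | z ∈ Set.range f ∧ z < x}
  have hbelow : below.Nonempty := ⟨cM M, by simpa [below, ← cM_embedding f] using hcx⟩
  obtain ⟨_, hy, hmax⟩ := below.exists_max_image id hbelow
  obtain ⟨⟨y, rfl⟩, hyx⟩ := (Finset.mem_filter.1 hy).2
  have hyd : y ≠ dM N := fun e => not_le_of_gt (by rwa [e, dM_embedding] at hyx) (h.bounds x).2
  obtain ⟨w, hyw⟩ := hN y hyd
  obtain ⟨hle, hne, himm⟩ := h.succ _ _ x ((sM_embedding f y w).2 hyw)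
  have hwx : f w < x := lt_of_le_of_ne (himm hyx.le hyx.ne) fun e => hx ⟨w, e⟩
  exact (lt_of_le_of_ne hle hne).not_ge (hmax _ (by simp [below, hwx]))

lemma realize_phi_substructure [Finite M] {k : ℕ} (hM : M ⊨ phi k) (S : tau.Substructure M) :
    S ⊨ phi k := by
  obtain ⟨h, -⟩ := realize_phi.1 hM
  by_cases hS : HasSuccessors S
  · obtain rfl : S = ⊤ := by
      refine eq_top_iff.2 fun x _ => ?_
      obtain ⟨y, rfl⟩ := h.surjective_of_embedding S.subtype hS x
      exact y.2
    exact (StrongHomClass.realize_sentence Substructure.topEquiv _).2 hM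
  · exact realize_phi.2 ⟨h.of_embedding S.subtype, fun h' => absurd h' hS⟩

end Heredity

section Arithmetic

def shift (u v δ x : ℕ) : ℕ := if u < x ∧ x ≤ v then x + δ else x

variable {u v δ x y : ℕ}

lemma shift_le_shift_iff (hx : ¬(v < x ∧ x ≤ v + δ + 1)) (hy : ¬(v < y ∧ y ≤ v + δ + 1)) :
    shift u v δ x ≤ shift u v δ y ↔ x ≤ y := by
  unfold shift; split_ifs <;> omega

lemma shift_eq_shift_add_one_iff (hxu : x ≠ u) (hx : ¬(v < x ∧ x ≤ v + δ + 1)) (hyu : y ≠ u)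
    (hy : ¬(v < y ∧ y ≤ v + δ + 1)) : shift u v δ y = shift u v δ x + 1 ↔ y = x + 1 := by
  unfold shift; split_ifs <;> omega

lemma exists_notMem_below (X : Finset ℕ) {q : ℕ} (hq : X.card < q) :
    ∃ u ∉ X, u < q ∧ q ≤ u + X.card + 1 := by
  obtain ⟨u, hu, huX⟩ := Finset.exists_mem_notMem_of_card_lt_card
    (s := X) (t := Finset.Ico (q - (X.card + 1)) q) (by simp only [Nat.card_Ico]; omega)
  rw [Finset.mem_Ico] at hu
  exact ⟨u, huX, hu.2, by omega⟩

lemma exists_gap_above (X : Finset ℕ) (g q : ℕ) :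
    ∃ v, q ≤ v ∧ v ≤ q + X.card * g ∧ ∀ w ∈ X, ¬(v < w ∧ w ≤ v + g) := by
  induction X using Finset.strongInduction generalizing q with
  | H X ih =>
  by_cases h : ∀ w ∈ X, ¬(q < w ∧ w ≤ q + g)
  · exact ⟨q, le_rfl, Nat.le_add_right _ _, h⟩
  obtain ⟨x, hx, hqx, hxq⟩ : ∃ x ∈ X, q < x ∧ x ≤ q + g := by simpa using h
  have hsub : X.filter (x < ·) ⊂ X := Finset.filter_ssubset.2 ⟨x, hx, lt_irrefl x⟩
  obtain ⟨v, hxv, hv, hgap⟩ := ih _ hsub x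
  have hcard : ((X.filter (x < ·)).card + 1) * g ≤ X.card * g :=
    Nat.mul_le_mul_right _ (Finset.card_lt_card hsub)
  refine ⟨v, by omega, by rw [add_mul] at hcard; omega, fun w hw hvw => ?_⟩
  exact hgap w (Finset.mem_filter.2 ⟨hw, by omega⟩) hvw

lemma add_le_or_add_le_of_ne {D i j : ℕ} (h : i ≠ j) :
    (i + 1) * D + D ≤ (j + 1) * D ∨ (j + 1) * D + D ≤ (i + 1) * D := by
  rcases Nat.lt_or_gt_of_ne h with h | h
  · exact Or.inl (by nlinarith)
  · exact Or.inr (by nlinarith)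

lemma exists_far_mark {k : ℕ} (xs : Fin k → ℕ) (R : ℕ) : ∃ j : Fin (k + 1), ∀ i,
    xs i + R < (j + 1) * (2 * R + 1) ∨ (j + 1) * (2 * R + 1) + R < xs i := by
  by_contra! h
  choose I hI using h
  obtain ⟨j, j', hne, hjj'⟩ := Fintype.exists_ne_map_eq_of_card_lt I (by simp)
  have := hI j
  have := hI j'
  have := add_le_or_add_le_of_ne (D := 2 * R + 1) (Fin.val_ne_of_ne hne)
  rw [hjj'] at *
  omega

end Arithmetic

@[ext]
structure Chain (L : ℕ) (Q : Set ℕ) : Type where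
  val : ℕ
  val_le : val ≤ L

namespace Chain

variable {L : ℕ} {Q : Set ℕ}

instance : tau.Structure (Chain L Q) where
  funMap {_} F _ := match F with
    | TauFun.c => ⟨0, L.zero_le⟩
    | TauFun.d => ⟨L, le_rfl⟩
  RelMap {_} R v := match R with
    | TauRel.le => (v 0).val ≤ (v 1).val
    | TauRel.succ => (v 1).val = (v 0).val + 1
    | TauRel.pelt => (v 0).val ∈ Q

instance : Finite (Chain L Q) :=
  Finite.of_injective (fun x : Chain L Q => (⟨x.val, Nat.lt_succ_of_le x.val_le⟩ : Fin (L + 1)))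
    fun _ _ h => Chain.ext (congrArg Fin.val h)

instance : Nonempty (Chain L Q) := ⟨⟨0, L.zero_le⟩⟩

@[simp] lemma val_cM : (cM (Chain L Q)).val = 0 := rfl
@[simp] lemma val_dM : (dM (Chain L Q)).val = L := rfl
@[simp] lemma leM_iff (a b : Chain L Q) : leM a b ↔ a.val ≤ b.val := Iff.rfl
@[simp] lemma sM_iff (a b : Chain L Q) : sM a b ↔ b.val = a.val + 1 := Iff.rfl
@[simp] lemma pM_iff (a : Chain L Q) : pM a ↔ a.val ∈ Q := Iff.rfl

lemma val_injective : Function.Injective (val : Chain L Q → ℕ) := fun _ _ => Chain.ext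

lemma chainAxioms : ChainAxioms (Chain L Q) where
  le_trans _ _ _ := by simp only [leM_iff]; omega
  le_antisymm _ _ h₁ h₂ := Chain.ext (by simp only [leM_iff] at h₁ h₂; omega)
  le_total _ _ := by simp only [leM_iff]; omega
  bounds a := by simp [a.val_le]
  succ a b z hs := by
    simp only [leM_iff, sM_iff, ne_eq, ← val_injective.eq_iff] at hs ⊢
    omega

lemma hasSuccessors : HasSuccessors (Chain L Q) := fun a ha =>
  ⟨⟨a.val + 1, lt_of_le_of_ne a.val_le fun h => ha (Chain.ext h)⟩, rfl⟩

lemma realize_phi_iff {k : ℕ} : Chain L Q ⊨ phi k ↔ MarkedAtLeast (Chain L Q) (k + 1) :=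
  realize_phi.trans ⟨fun h => h.2 hasSuccessors, fun h => ⟨chainAxioms, fun _ => h⟩⟩

lemma markedAtLeast_of_range {m : ℕ} {p : Fin m → ℕ} (hp : Function.Injective p)
    (hpL : ∀ i, p i ≤ L) : MarkedAtLeast (Chain L (Set.range p)) m :=
  ⟨fun i => ⟨p i, hpL i⟩, fun _ _ h => hp (congrArg val h), fun i => ⟨i, rfl⟩⟩

lemma not_markedAtLeast_of_subset_range {m : ℕ} {p : Fin m → ℕ} (hQ : Q ⊆ Set.range p) :
    ¬ MarkedAtLeast (Chain L Q) (m + 1) := by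
  rintro ⟨g, hg, hP⟩
  choose idx hidx using fun i => hQ ((pM_iff _).1 (hP i))
  have hinj : Function.Injective idx := fun i j h =>
    hg (Chain.ext (by rw [← hidx i, ← hidx j, h]))
  simpa using Fintype.card_le_of_injective idx hinj

def substructureOf (X : Finset ℕ) (h0 : 0 ∈ X) (hL : L ∈ X) :
    tau.Substructure (Chain L Q) where
  carrier := {x | x.val ∈ X}
  fun_mem {_} F _ _ := by cases F; exacts [h0, hL]

end Chain

namespace Chain

variable {L : ℕ}

lemma exists_shift_embedding {QA QB : Set ℕ} {X : Finset ℕ} (h0 : 0 ∈ X) (hL : L ∈ X)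
    {u v δ : ℕ} (hu : u ∉ X) (hgap : ∀ w ∈ X, ¬(v < w ∧ w ≤ v + δ + 1)) (hvL : v < L)
    (hQ : ∀ w ∈ X, ¬(u < w ∧ w ≤ v) → (w ∈ QA ↔ w ∈ QB))
    (hQwin : ∀ w ∈ X, u < w → w ≤ v → w ∉ QA ∧ w + δ ∉ QB) :
    ∃ g : substructureOf (Q := QA) X h0 hL ↪[tau] Chain L QB,
      ∀ x, (g x).val = shift u v δ x.1.val := by
  have hmem (x : substructureOf (Q := QA) X h0 hL) : x.1.val ∈ X := x.2
  have hne (x : substructureOf (Q := QA) X h0 hL) : x.1.val ≠ u := fun h => hu (h ▸ hmem x)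
  have hbound (x : substructureOf (Q := QA) X h0 hL) : shift u v δ x.1.val ≤ L := by
    have := hgap L hL
    have := x.1.val_le
    unfold shift; split_ifs <;> omega
  refine ⟨{ toFun := fun x => ⟨shift u v δ x.1.val, hbound x⟩
            inj' := fun x y h => ?_
            map_fun' := fun {_} F w => ?_
            map_rel' := fun {_} R w => ?_ }, fun _ => rfl⟩
  · have hxy := congrArg Chain.val h
    have key := fun a b => shift_le_shift_iff (u := u) (hgap _ (hmem a)) (hgap _ (hmem b))
    exact Subtype.ext (Chain.ext (le_antisymm ((key x y).1 hxy.le) ((key y x).1 hxy.ge)))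
  · cases F
    · exact Chain.ext (show shift u v δ 0 = 0 by simp [shift])
    · exact Chain.ext (show shift u v δ L = L by simp [shift, hvL.not_ge])
  · cases R
    · exact shift_le_shift_iff (hgap _ (hmem _)) (hgap _ (hmem _))
    · exact shift_eq_shift_add_one_iff (hne _) (hgap _ (hmem _)) (hne _) (hgap _ (hmem _))
    · change shift u v δ _ ∈ QB ↔ _ ∈ QA
      by_cases hwin : u < (w 0).1.val ∧ (w 0).1.val ≤ v
      · rw [shift, if_pos hwin]
        have := hQwin _ (hmem _) hwin.1 hwin.2
        exact iff_of_false this.2 this.1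
      · rw [shift, if_neg hwin]
        exact (hQ _ (hmem _) hwin).symm

/-- Take `u ∉ X` just below `q` and a gap of `X` just above some `v ≥ q`: translating `(u, v]`
by `q - u` moves the points of `X` there past `q`, where `QB` has no marks. -/
lemma exists_embedding_erase {QB : Set ℕ} {X : Finset ℕ} (h0 : 0 ∈ X) (hL : L ∈ X) {q R : ℕ}
    (hR : (X.card + 2) ^ 2 ≤ R) (hqR : R < q) (hqL : q + R < L)
    (hiso : ∀ w ∈ QB, q < w + R → w < q + R → w = q) :
    ∃ g : substructureOf (Q := QB \ {q}) X h0 hL ↪[tau] Chain L QB,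
      ∀ x : substructureOf X h0 hL, (x.1.val + R < q ∨ q + R < x.1.val) →
        (g x).val = x.1.val := by
  obtain ⟨u, huX, huq, hqu⟩ := exists_notMem_below X (q := q) (by nlinarith)
  obtain ⟨v, hqv, hv, hgap⟩ := exists_gap_above X (X.card + 2) q
  have hRv : X.card * (X.card + 2) + X.card + 2 ≤ R := by nlinarith
  obtain ⟨g, hg⟩ := exists_shift_embedding (QA := QB \ {q}) (QB := QB) h0 hL (u := u) (v := v)
    (δ := q - u) huX (fun w hw hvw => hgap w hw (by omega)) (by omega)
    (fun w _ hwin => by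
      simp only [Set.mem_sdiff, Set.mem_singleton_iff, and_iff_left_iff_imp]
      omega)
    (fun w _ huw hwv => by
      refine ⟨fun ⟨hw, hwq⟩ => hwq (hiso w hw (by omega) (by omega)), fun hw => ?_⟩
      have := hiso _ hw (by omega) (by omega)
      omega)
  refine ⟨g, fun x hx => ?_⟩
  rw [hg, shift, if_neg (by omega)]

lemma realize_existsForallSentence_erase {k n q R : ℕ} {QB : Set ℕ}
    {ψ : tau.BoundedFormula Empty (k + n)} (hψ : ψ.IsQF) (xs : Fin k → Chain L QB)
    (hall : ∀ ys, ψ.Realize default (Fin.append xs ys))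
    (hfar : ∀ i, (xs i).val + R < q ∨ q + R < (xs i).val)
    (hR : (k + n + 4) ^ 2 ≤ R) (hqR : R < q) (hqL : q + R < L)
    (hiso : ∀ w ∈ QB, q < w + R → w < q + R → w = q) :
    Chain L (QB \ {q}) ⊨ existsForallSentence k n ψ := by
  rw [realize_existsForallSentence]
  refine ⟨fun i => ⟨(xs i).val, (xs i).val_le⟩, fun ys => ?_⟩
  set zs := Fin.append (fun i => (⟨(xs i).val, (xs i).val_le⟩ : Chain L (QB \ {q}))) ys
  let I : Finset ℕ := Finset.univ.image fun i => (zs i).val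
  let X : Finset ℕ := insert 0 (insert L I)
  have h0 : 0 ∈ X := Finset.mem_insert_self _ _
  have hL : L ∈ X := Finset.mem_insert_of_mem (Finset.mem_insert_self _ _)
  have hcard : X.card ≤ k + n + 2 := calc
    X.card ≤ I.card + 2 := (Finset.card_insert_le _ _).trans (by grind [Finset.card_insert_le])
    _ ≤ k + n + 2 := by grw [Finset.card_image_le, Finset.card_univ, Fintype.card_fin]
  obtain ⟨g, hg⟩ := exists_embedding_erase h0 hL
    ((Nat.pow_le_pow_left (by omega) 2).trans hR) hqR hqL hiso
  let ws : Fin (k + n) → substructureOf X h0 hL := fun i =>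
    ⟨zs i, show (zs i).val ∈ X by simp [X, I]⟩
  have hws : g ∘ ws = Fin.append xs (g ∘ ws ∘ Fin.natAdd k) := by
    funext i
    refine Fin.addCases (fun i => Chain.ext ?_) (fun i => ?_) i
    · simpa [ws, zs] using hg (ws (Fin.castAdd n i)) (by simpa [ws, zs] using hfar i)
    · simp
  exact realize_of_embedding_substructure hψ g ws (hws ▸ hall _)

end Chain

lemma exists_xor_realize_phi_existsForallSentence {k n : ℕ}
    {ψ : tau.BoundedFormula Empty (k + n)} (hψ : ψ.IsQF) :
    ∃ (M : Type) (_ : tau.Structure M), Finite M ∧ Nonempty M ∧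
      Xor' (M ⊨ phi k) (M ⊨ existsForallSentence k n ψ) := by
  set R := (k + n + 4) ^ 2
  set D := 2 * R + 1 with hD
  let q : Fin (k + 1) → ℕ := fun j => (j + 1) * D
  have hqL (j : Fin (k + 1)) : q j + R < (k + 2) * D := by
    have : (j.val + 2) * D ≤ (k + 2) * D := Nat.mul_le_mul_right _ (by omega)
    have : (j.val + 2) * D = q j + D := by ring
    omega
  have hB : Chain ((k + 2) * D) (Set.range q) ⊨ phi k := by
    refine Chain.realize_phi_iff.2 (Chain.markedAtLeast_of_range (fun i j h => ?_)
      fun j => (hqL j).le.trans' (Nat.le_add_right _ _))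
    exact Fin.ext (by simpa [q] using h)
  by_cases hγ : Chain ((k + 2) * D) (Set.range q) ⊨ existsForallSentence k n ψ
  swap
  · exact ⟨_, _, inferInstance, inferInstance, Or.inl ⟨hB, hγ⟩⟩
  obtain ⟨xs, hall⟩ := (realize_existsForallSentence ψ).1 hγ
  obtain ⟨j, hj⟩ := exists_far_mark (fun i => (xs i).val) R
  have hiso : ∀ w ∈ Set.range q, q j < w + R → w < q j + R → w = q j := by
    rintro _ ⟨i, rfl⟩ h₁ h₂
    by_contra hne
    have := add_le_or_add_le_of_ne (D := D) (Fin.val_ne_of_ne fun e => hne (congrArg q e))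
    simp only [q] at *
    omega
  have hsub : Set.range q \ {q j} ⊆ Set.range (q ∘ j.succAbove) := by
    rintro _ ⟨⟨i, rfl⟩, hi⟩
    obtain ⟨i', rfl⟩ := Fin.exists_succAbove_eq (x := i) (y := j) fun e => hi (e ▸ rfl)
    exact ⟨i', rfl⟩
  have hqR : R < q j := (by omega : R < D).trans_le (Nat.le_mul_of_pos_left D j.val.succ_pos)
  refine ⟨_, _, inferInstance, inferInstance, Or.inr ⟨Chain.realize_existsForallSentence_erase
    hψ xs hall hj le_rfl hqR (hqL j) hiso, fun hA => ?_⟩⟩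
  exact Chain.not_markedAtLeast_of_subset_range hsub (Chain.realize_phi_iff.1 hA)

/-- **Failure of `GLT(k)` in the finite**: for the vocabulary `τ = {≤, S, P, c, d}` and each
`k`, there is an `FO(τ)` sentence that is `k`-hereditary over the class `𝒮` of all finite
`τ`-structures (every finite model has a set of at most `k` elements such that every nonempty
substructure containing it is again a model), but that is not equivalent over `𝒮` to any
`∃^k∀*` sentence: for every such prenex sentence `γ` there is a finite `τ`-structure
satisfying exactly one of the two. -/
theorem failure_glt_k_finite (k : ℕ) :
    ∃ φ : tau.Sentence,
      (∀ (M : Type) [tau.Structure M] [Finite M] [Nonempty M], M ⊨ φ →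
        ∃ C : Finset M, C.card ≤ k ∧
          ∀ N : tau.Substructure M, (N : Set M).Nonempty → (C : Set M) ⊆ (N : Set M) →
            (N : Type) ⊨ φ) ∧
      ∀ (n : ℕ) (ψ : tau.BoundedFormula Empty (k + n)), ψ.IsQF →
        ∃ (M : Type) (_ : tau.Structure M), Finite M ∧ Nonempty M ∧
          Xor' (M ⊨ φ) (M ⊨ existsForallSentence k n ψ) :=
  ⟨phi k, fun _ _ _ _ hM => ⟨∅, by simp, fun N _ _ => realize_phi_substructure hM N⟩,
    fun _ _ hψ => exists_xor_realize_phi_existsForallSentence hψ⟩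

end LTFinite
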